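/- Let F, G ∈ ℂ[x,y] be homogeneous of degree n with no common (nonconstant) factor. Let I = ∂F/∂x + ∂G/∂y and J = yF − xG. If J vanishes to order at least 2 at a point u of the projective line (i.e., a linear form ℓ with ℓ² dividing J), then I does not vanish at u (ℓ does not divide I). -/

import Mathlib

open MvPolynomial

lemma deg_univ (d : Fin 2 →₀ ℕ) : d.degree = ∑ i : Fin 2, d i := by
  rw [Finsupp.degree]
  exact Finset.sum_subset (Finset.subset_univ _)
    (by intro i _ h; simpa using (Finsupp.notMem_support_iff.mp h))

lemma euler_mono (d : Fin 2 →₀ ℕ) (c : ℂ) :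
    ∑ i : Fin 2, X i * pderiv i (monomial d c) = (d.degree : ℂ) • monomial d c := by
  have key : ∀ i : Fin 2, X i * pderiv i (monomial d c) = monomial d (c * d i) := by
    intro i
    rw [pderiv_monomial]
    by_cases h : d i = 0
    · simp [h]
    · rw [X, monomial_mul, one_mul, add_tsub_cancel_of_le]
      exact Finsupp.single_le_iff.mpr (Nat.one_le_iff_ne_zero.mpr h)
  simp only [key]
  have : ∑ i : Fin 2, (monomial d) (c * (d i : ℂ)) = monomial d (c * ∑ i : Fin 2, (d i : ℂ)) := by
    rw [Finset.mul_sum, map_sum]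
  rw [this, deg_univ, smul_monomial, smul_eq_mul]
  congr 1
  push_cast
  ring

lemma euler (n : ℕ) (F : MvPolynomial (Fin 2) ℂ) (hF : F.IsHomogeneous n) :
    X 0 * pderiv 0 F + X 1 * pderiv 1 F = (n : ℂ) • F := by
  rw [← Fin.sum_univ_two (fun i => X i * pderiv i F)]
  conv_lhs => rw [F.as_sum]
  conv_rhs => rw [F.as_sum]
  simp only [map_sum, Finset.mul_sum, Finset.smul_sum]
  rw [Finset.sum_comm]
  refine Finset.sum_congr rfl fun d hd => ?_
  rw [euler_mono, Finsupp.degree_eq_weight_one,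
    show (Finsupp.weight (fun _ : Fin 2 => (1 : ℕ))) d = n from hF (mem_support_iff.mp hd)]

/-- If `F, G` are coprime homogeneous binary forms of degree `n`,
`I = ∂F/∂x + ∂G/∂y`, `J = yF − xG`, and a nonzero linear form `ℓ`
(i.e. a point of the projective line) satisfies `ℓ² ∣ J`, then `ℓ ∤ I`. -/
theorem stmt_1 (n : ℕ) (hn : 1 ≤ n) (F G : MvPolynomial (Fin 2) ℂ)
    (hF : F.IsHomogeneous n) (hG : G.IsHomogeneous n)
    (hcop : IsRelPrime F G)
    (I J : MvPolynomial (Fin 2) ℂ)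
    (hI : I = pderiv 0 F + pderiv 1 G)
    (hJ : J = X 1 * F - X 0 * G)
    (ℓ : MvPolynomial (Fin 2) ℂ) (hℓ : ℓ.IsHomogeneous 1) (hℓ0 : ℓ ≠ 0)
    (hdvd : ℓ ^ 2 ∣ J) :
    ¬ ℓ ∣ I := by
  intro hdI
  -- ℓ divides both partial derivatives of J
  have hdJ : ∀ i : Fin 2, ℓ ∣ pderiv i J := by
    intro i
    obtain ⟨c, hc⟩ := hdvd
    rw [hc, sq, mul_assoc, pderiv_mul]
    exact dvd_add ⟨pderiv i ℓ * c, by ring⟩ ⟨pderiv i (ℓ * c), rfl⟩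
  -- key identities
  have hEF := euler n F hF
  have hEG := euler n G hG
  have idF : ((n : ℂ) + 1) • F = pderiv 1 J + X 0 * I := by
    rw [hI, hJ]
    simp only [map_sub, pderiv_mul, pderiv_X_self, pderiv_X_of_ne (by decide : (0 : Fin 2) ≠ 1)]
    have : pderiv 1 F * X 1 = X 1 * pderiv 1 F := mul_comm _ _
    rw [add_smul, one_smul, ← hEF]
    ring
  have idG : ((n : ℂ) + 1) • G = X 1 * I - pderiv 0 J := by
    rw [hI, hJ]
    simp only [map_sub, pderiv_mul, pderiv_X_self, pderiv_X_of_ne (by decide : (1 : Fin 2) ≠ 0)]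
    rw [add_smul, one_smul, ← hEG]
    ring
  have hn1 : ((n : ℂ) + 1) ≠ 0 := Nat.cast_add_one_ne_zero n
  have hdF : ℓ ∣ F := by
    have h1 : ℓ ∣ ((n : ℂ) + 1) • F := idF ▸ dvd_add (hdJ 1) (Dvd.dvd.mul_left hdI _)
    have : F = C ((n : ℂ) + 1)⁻¹ * (((n : ℂ) + 1) • F) := by
      rw [smul_eq_C_mul, ← mul_assoc, ← C_mul, inv_mul_cancel₀ hn1, C_1, one_mul]
    rw [this]
    exact Dvd.dvd.mul_left h1 _
  have hdG : ℓ ∣ G := by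
    have h1 : ℓ ∣ ((n : ℂ) + 1) • G :=
      idG ▸ dvd_sub (Dvd.dvd.mul_left hdI _) (hdJ 0)
    have : G = C ((n : ℂ) + 1)⁻¹ * (((n : ℂ) + 1) • G) := by
      rw [smul_eq_C_mul, ← mul_assoc, ← C_mul, inv_mul_cancel₀ hn1, C_1, one_mul]
    rw [this]
    exact Dvd.dvd.mul_left h1 _
  -- ℓ is a unit, contradiction with homogeneity of degree 1
  have hunit : IsUnit ℓ := hcop hdF hdG
  obtain ⟨q, hq⟩ := isUnit_iff_exists_inv.mp hunit
  have h0 : constantCoeff ℓ = 0 := hℓ.coeff_eq_zero (by simp [Finsupp.degree])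
  have := congrArg constantCoeff hq
  rw [map_mul, map_one, h0, zero_mul] at this
  exact zero_ne_one this
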